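/- Fix 0 < α < 1, −1 ≤ λ ≤ 1, and t > 0. Let Z1, Z2 be independent standard normal random variables and for α' with α ≤ α' ≤ 1 set X = Z1 and Y = α'·Z1 + √(1−α'²)·Z2. Then Pr[X ≥ t ∧ Y ≥ α^λ·t] ≥ e^{-Δ²/2} / (2π(1 + t/α)²), where Δ² = (1 + (α^λ − α)²/(1−α²)) · t². -/

import Mathlib

/-!
The event contains a quadrant `[u, ∞) × [v, ∞)`, whose probability is `Pr[Z ≥ u] Pr[Z ≥ v]`
by independence. Each tail is at least `e^{-s²/2} / (√(2π) (s + 1))`: this is the integral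
over `(s, ∞)` of the derivative of `-e^{-x²/2} / (x + 1)`, which is at most `e^{-x²/2}` for
`x ≥ 0`. The corner is the point of the event nearest to the origin: `(t, 0)` if `α^λ ≤ α'`,
the vertex `(t, (α^λ - α') t / √(1 - α'²))` if `α' < α^λ ≤ 1 / α'`, and otherwise the foot
`α^λ t (α', √(1 - α'²))` of the perpendicular to the line `Y = α^λ t`. For `α' = α` the
vertex has squared norm `Δ²`, raising `α'` only brings the nearest point closer, and its
coordinates stay below `t / α`.
-/

open MeasureTheory ProbabilityTheory Real Set Filter Topology

lemma hasDerivAt_neg_exp_neg_sq_div_two_div_add_one {x : ℝ} (hx : x + 1 ≠ 0) :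
    HasDerivAt (fun y ↦ -exp (-y ^ 2 / 2) / (y + 1))
      (exp (-x ^ 2 / 2) * ((x ^ 2 + x + 1) / (x + 1) ^ 2)) x := by
  refine ((((hasDerivAt_pow 2 x).fun_neg.div_const 2).exp.fun_neg).fun_div
    ((hasDerivAt_id' x).add_const 1) hx).congr_deriv ?_
  field_simp
  ring

lemma tendsto_neg_exp_neg_sq_div_two_div_add_one :
    Tendsto (fun y : ℝ ↦ -exp (-y ^ 2 / 2) / (y + 1)) atTop (𝓝 0) := by
  have hexp : Tendsto (fun y : ℝ ↦ -exp (-y ^ 2 / 2)) atTop (𝓝 0) := by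
    simpa using (tendsto_exp_atBot.comp <| (tendsto_neg_atTop_atBot.comp
      (tendsto_pow_atTop (α := ℝ) two_ne_zero)).atBot_div_const two_pos).neg
  exact hexp.div_atTop (tendsto_atTop_add_const_right _ 1 tendsto_id)

lemma div_add_one_le_integral_exp_neg_sq_div_two {u : ℝ} (hu : 0 ≤ u) :
    exp (-u ^ 2 / 2) / (u + 1) ≤ ∫ x in Ioi u, exp (-x ^ 2 / 2) := by
  have hderiv : ∀ x ∈ Ici u, HasDerivAt (fun y ↦ -exp (-y ^ 2 / 2) / (y + 1))
      (exp (-x ^ 2 / 2) * ((x ^ 2 + x + 1) / (x + 1) ^ 2)) x := fun x hx ↦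
    hasDerivAt_neg_exp_neg_sq_div_two_div_add_one (by linarith [mem_Ici.1 hx])
  have hnonneg : ∀ x ∈ Ioi u, 0 ≤ exp (-x ^ 2 / 2) * ((x ^ 2 + x + 1) / (x + 1) ^ 2) :=
    fun x hx ↦ by have : 0 ≤ x := hu.trans (le_of_lt hx); positivity
  have hint := integrableOn_Ioi_deriv_of_nonneg' hderiv hnonneg
    tendsto_neg_exp_neg_sq_div_two_div_add_one
  have hFTC := integral_Ioi_of_hasDerivAt_of_nonneg' hderiv hnonneg
    tendsto_neg_exp_neg_sq_div_two_div_add_one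
  calc exp (-u ^ 2 / 2) / (u + 1)
      = ∫ x in Ioi u, exp (-x ^ 2 / 2) * ((x ^ 2 + x + 1) / (x + 1) ^ 2) := by
        rw [hFTC]; ring
    _ ≤ ∫ x in Ioi u, exp (-x ^ 2 / 2) := by
        refine setIntegral_mono_on hint ?_ measurableSet_Ioi fun x hx ↦ ?_
        · exact (integrable_exp_neg_mul_sq (b := 1 / 2) (by norm_num)).integrableOn.congr_fun
            (fun x _ ↦ by ring_nf) measurableSet_Ioi
        · have hx0 : 0 ≤ x := hu.trans (le_of_lt hx)
          refine mul_le_of_le_one_right (exp_nonneg _) ?_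
          rw [div_le_one (by positivity)]
          nlinarith

lemma ofReal_le_gaussianReal_Ici {u : ℝ} (hu : 0 ≤ u) :
    ENNReal.ofReal (exp (-u ^ 2 / 2) / (√(2 * π) * (u + 1))) ≤ gaussianReal 0 1 (Ici u) := by
  rw [gaussianReal_apply_eq_integral 0 one_ne_zero, integral_Ici_eq_integral_Ioi]
  refine ENNReal.ofReal_le_ofReal ?_
  simp only [gaussianPDFReal_def, NNReal.coe_one, mul_one, sub_zero, integral_const_mul]
  rw [mul_comm, ← div_div, div_eq_inv_mul]
  gcongr
  exact div_add_one_le_integral_exp_neg_sq_div_two hu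

lemma rpow_mem_Icc_self_inv {α lam : ℝ} (hα0 : 0 < α) (hα1 : α ≤ 1)
    (hlam : lam ∈ Icc (-1) 1) : α ^ lam ∈ Icc α α⁻¹ := by
  constructor
  · simpa using rpow_le_rpow_of_exponent_ge hα0 hα1 hlam.2
  · simpa [rpow_neg_one] using rpow_le_rpow_of_exponent_ge hα0 hα1 hlam.1

lemma sq_le_one_add_sq_sub_div {α c : ℝ} (hα : α ^ 2 < 1) :
    c ^ 2 ≤ 1 + (c - α) ^ 2 / (1 - α ^ 2) := by
  rw [← sub_le_iff_le_add', le_div_iff₀ (by linarith)]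
  nlinarith [sq_nonneg (c * α - 1)]

lemma sub_mul_div_sqrt_one_sub_sq_le_div {α c t : ℝ} (hα0 : 0 < α) (hα2 : α ^ 2 < 1)
    (hαc : α * c ≤ 1) (ht : 0 ≤ t) : (c - α) * t / √(1 - α ^ 2) ≤ t / α := by
  have hp : α * (c - α) ≤ √(1 - α ^ 2) :=
    (by nlinarith : α * (c - α) ≤ 1 - α ^ 2).trans (le_sqrt_self_iff.2 (by nlinarith))
  rw [div_le_div_iff₀ (sqrt_pos.2 (by linarith)) hα0]
  nlinarith

lemma sub_div_sqrt_one_sub_sq_le {α α' c : ℝ} (hα : 0 ≤ α) (hαα' : α ≤ α') (hα'c : α' < c)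
    (hcα' : c * α' ≤ 1) : (c - α') / √(1 - α' ^ 2) ≤ (c - α) / √(1 - α ^ 2) := by
  have hα'1 : α' ^ 2 < 1 := by nlinarith
  have hp : 0 < √(1 - α ^ 2) := sqrt_pos.2 (by nlinarith)
  have hq : 0 < √(1 - α' ^ 2) := sqrt_pos.2 (by linarith)
  rw [div_le_div_iff₀ hq hp]
  refine (pow_le_pow_iff_left₀ (by nlinarith) (by nlinarith) two_ne_zero).1 ?_
  rw [mul_pow, mul_pow, sq_sqrt (by nlinarith), sq_sqrt (by linarith)]
  -- the difference of the two sides is (α' - α) ((c - α)(1 - c α') + (c - α')(1 - c α))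
  nlinarith [mul_nonneg (mul_nonneg (sub_nonneg.2 hαα') (by linarith : 0 ≤ c - α))
      (sub_nonneg.2 hcα'), mul_nonneg (mul_nonneg (sub_nonneg.2 hαα') (sub_nonneg.2 hα'c.le))
      (by nlinarith : 0 ≤ 1 - c * α)]

lemma Ici_prod_Ici_subset {a b r t u v : ℝ} (ha : 0 ≤ a) (hb : 0 ≤ b) (htu : t ≤ u)
    (hr : r ≤ a * u + b * v) :
    Ici u ×ˢ Ici v ⊆ {z : ℝ × ℝ | t ≤ z.1 ∧ r ≤ a * z.1 + b * z.2} := by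
  rintro ⟨z₁, z₂⟩ ⟨hz₁, hz₂⟩
  exact ⟨htu.trans hz₁, hr.trans (by gcongr <;> assumption)⟩

lemma exists_corner_in_tail_region {α α' c t : ℝ} (hα0 : 0 < α) (hα1 : α < 1)
    (hc : c ∈ Icc α α⁻¹) (hα' : α' ∈ Icc α 1) (ht : 0 < t) :
    ∃ u v, 0 ≤ v ∧ u ≤ t / α ∧ v ≤ t / α ∧
      u ^ 2 + v ^ 2 ≤ (1 + (c - α) ^ 2 / (1 - α ^ 2)) * t ^ 2 ∧
      t ≤ u ∧ c * t ≤ α' * u + √(1 - α' ^ 2) * v := by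
  obtain ⟨hαc, hcα⟩ := hc
  obtain ⟨hαα', hα'1⟩ := hα'
  have hα2 : α ^ 2 < 1 := by nlinarith
  have hc0 : 0 < c := hα0.trans_le hαc
  have hq2 : √(1 - α' ^ 2) ^ 2 = 1 - α' ^ 2 := sq_sqrt (by nlinarith)
  have hαc1 : α * c ≤ 1 := by
    simpa [mul_inv_cancel₀ hα0.ne'] using mul_le_mul_of_nonneg_left hcα hα0.le
  have hct : c * t ≤ t / α := by
    rw [le_div_iff₀ hα0]; nlinarith
  have htt : t ≤ t / α := le_div_self ht.le hα0 hα1.le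
  set s := (c - α) * t / √(1 - α ^ 2) with hs
  have hΔ : (1 + (c - α) ^ 2 / (1 - α ^ 2)) * t ^ 2 = t ^ 2 + s ^ 2 := by
    rw [hs, div_pow, mul_pow, sq_sqrt (by linarith)]; ring
  have hst : s ≤ t / α := sub_mul_div_sqrt_one_sub_sq_le_div hα0 hα2 hαc1 ht.le
  rcases le_or_gt c α' with hcα' | hα'c
  · exact ⟨t, 0, le_rfl, htt, by positivity, by nlinarith, le_rfl, by nlinarith⟩
  rcases le_or_gt (c * α') 1 with hcα'1 | hcα'1
  · have hq : 0 < √(1 - α' ^ 2) := sqrt_pos.2 (by nlinarith)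
    have hv : (c - α') * t / √(1 - α' ^ 2) ≤ s := by
      rw [hs, mul_div_right_comm, mul_div_right_comm (c - α)]
      exact mul_le_mul_of_nonneg_right
        (sub_div_sqrt_one_sub_sq_le hα0.le hαα' hα'c hcα'1) ht.le
    have hv0 : 0 ≤ (c - α') * t / √(1 - α' ^ 2) := by have := sub_pos.2 hα'c; positivity
    refine ⟨t, _, hv0, htt, hv.trans hst, ?_, le_rfl, ?_⟩
    · rw [hΔ]; gcongr
    · rw [mul_div_cancel₀ _ hq.ne']; nlinarith
  · refine ⟨c * t * α', c * t * √(1 - α' ^ 2), by positivity, ?_, ?_, ?_, by nlinarith, ?_⟩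
    · exact (mul_le_of_le_one_right (by positivity) hα'1).trans hct
    · exact (mul_le_of_le_one_right (by positivity) (sqrt_le_one.2 (by nlinarith))).trans hct
    · calc (c * t * α') ^ 2 + (c * t * √(1 - α' ^ 2)) ^ 2 = c ^ 2 * t ^ 2 := by
            linear_combination (c * t) ^ 2 * hq2
        _ ≤ _ := mul_le_mul_of_nonneg_right (sq_le_one_add_sq_sub_div hα2) (sq_nonneg t)
    · linear_combination (-(c * t)) * hq2

lemma ofReal_le_gaussianReal_prod_Ici_prod_Ici {u v : ℝ} (hu : 0 ≤ u) (hv : 0 ≤ v) :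
    ENNReal.ofReal (exp (-(u ^ 2 + v ^ 2) / 2) / (2 * π * ((u + 1) * (v + 1))))
      ≤ ((gaussianReal 0 1).prod (gaussianReal 0 1)) (Ici u ×ˢ Ici v) := by
  rw [Measure.prod_prod]
  refine le_trans (le_of_eq ?_) (mul_le_mul' (ofReal_le_gaussianReal_Ici hu)
    (ofReal_le_gaussianReal_Ici hv))
  rw [← ENNReal.ofReal_mul (by positivity)]
  congr 1
  have h2π : √(2 * π) * √(2 * π) = 2 * π := mul_self_sqrt (by positivity)
  rw [div_mul_div_comm, ← exp_add, mul_mul_mul_comm (√(2 * π)), h2π]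
  congr 2
  ring

/-- Bivariate Gaussian tail lower bound: for standard normals `X = Z1` and
`Y = α'·Z1 + √(1-α'²)·Z2` with correlation `α' ≥ α`,
`Pr[X ≥ t ∧ Y ≥ α^λ·t] ≥ e^{-Δ²/2}/(2π(1+t/α)²)` where
`Δ² = (1 + (α^λ-α)²/(1-α²))·t²`. -/
theorem bivariate_tail_lower (α lam t α' : ℝ) (hα0 : 0 < α) (hα1 : α < 1)
    (hlam : lam ∈ Set.Icc (-1 : ℝ) 1) (ht : 0 < t)
    (hα'lo : α ≤ α') (hα'hi : α' ≤ 1) :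
    ENNReal.ofReal
        (Real.exp (-((1 + (α ^ lam - α) ^ 2 / (1 - α ^ 2)) * t ^ 2) / 2) /
          (2 * Real.pi * (1 + t / α) ^ 2))
      ≤ ((gaussianReal 0 1).prod (gaussianReal 0 1))
          {z : ℝ × ℝ | t ≤ z.1 ∧ α ^ lam * t ≤ α' * z.1 + Real.sqrt (1 - α' ^ 2) * z.2} := by
  obtain ⟨u, v, hv, hut, hvt, hΔ, htu, hcorner⟩ :=
    exists_corner_in_tail_region hα0 hα1 (rpow_mem_Icc_self_inv hα0 hα1.le hlam)
      ⟨hα'lo, hα'hi⟩ ht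
  have hu : 0 ≤ u := ht.le.trans htu
  calc _ ≤ ENNReal.ofReal (exp (-(u ^ 2 + v ^ 2) / 2) / (2 * π * ((u + 1) * (v + 1)))) := by
        refine ENNReal.ofReal_le_ofReal (div_le_div₀ (exp_nonneg _) ?_ (by positivity) ?_)
        · exact exp_le_exp.2 (by linarith)
        · rw [sq]
          gcongr 2 * π * ?_
          exact mul_le_mul (by linarith) (by linarith) (by linarith) (by positivity)
    _ ≤ _ := ofReal_le_gaussianReal_prod_Ici_prod_Ici hu hv
    _ ≤ _ :=
        measure_mono (Ici_prod_Ici_subset (hα0.le.trans hα'lo) (sqrt_nonneg _) htu hcorner)
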